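/- The first Grigorchuk group G₀ is infinite, and every element of G₀ has finite order which is a power of 2: for every g ∈ G₀ there exists k ∈ ℕ with g^(2^k) = 1. -/

import Mathlib

namespace AutSG

variable {X Q : Type*}

/-- The action of a state `q` of a Mealy automaton with transition function `δ`
and output function `out` on finite words over the alphabet `X`. -/
def mAct (δ : Q → X → Q) (out : Q → X → X) : Q → List X → List X
  | _, [] => []
  | q, x :: w => out q x :: mAct δ out (δ q x) w

theorem mAct_bijective (δ : Q → X → Q) (out : Q → X → X)
    (hout : ∀ q, Function.Bijective (out q)) (q : Q) :
    Function.Bijective (mAct δ out q) := by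
  have key : ∀ (l₁ : List X) (q : Q) (l₂ : List X),
      mAct δ out q l₁ = mAct δ out q l₂ → l₁ = l₂ := by
    intro l₁
    induction l₁ with
    | nil =>
      intro q l₂ h
      cases l₂ with
      | nil => rfl
      | cons y u => exact absurd h (by simp [mAct])
    | cons x w ih =>
      intro q l₂ h
      cases l₂ with
      | nil => exact absurd h (by simp [mAct])
      | cons y u =>
        simp only [mAct, List.cons.injEq] at h
        obtain rfl : x = y := (hout q).1 h.1
        rw [ih (δ q x) u h.2]
  have key2 : ∀ (l : List X) (q : Q), ∃ m, mAct δ out q m = l := by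
    intro l
    induction l with
    | nil => exact fun q => ⟨[], rfl⟩
    | cons y u ih =>
      intro q
      obtain ⟨x, hx⟩ := (hout q).2 y
      obtain ⟨m, hm⟩ := ih (δ q x)
      exact ⟨x :: m, by simp [mAct, hx, hm]⟩
  exact ⟨fun {l₁ l₂} h => key l₁ q l₂ h, fun l => key2 l q⟩

/-- The permutation of `X*` induced by the state `q` of an invertible Mealy automaton,
as an element of `Equiv.Perm (List X)`.  We use the convention that permutations act
on the *right* via `rApp` below, so that the Lean group multiplication `g * h`
corresponds to "first `g`, then `h`", as in the usual convention for automaton groups. -/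
noncomputable def genPerm (δ : Q → X → Q) (out : Q → X → X)
    (hout : ∀ q, Function.Bijective (out q)) (q : Q) : Equiv.Perm (List X) :=
  (Equiv.ofBijective _ (mAct_bijective δ out hout q))⁻¹

/-- Right action of a permutation on words: `rApp g w` is `w^g`.
Note `rApp (g * h) w = rApp h (rApp g w)`. -/
def rApp (g : Equiv.Perm (List X)) (w : List X) : List X := g⁻¹ w

theorem rApp_genPerm (δ : Q → X → Q) (out : Q → X → X)
    (hout : ∀ q, Function.Bijective (out q)) (q : Q) (w : List X) :
    rApp (genPerm δ out hout q) w = mAct δ out q w := by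
  simp [rApp, genPerm, Equiv.ofBijective]

/-- Commutator with the convention `[x,y] = x⁻¹y⁻¹xy`. -/
def comm {G : Type*} [Group G] (x y : G) : G := x⁻¹ * y⁻¹ * x * y

/-- Conjugation with the convention `y^z = z⁻¹yz`. -/
def conj {G : Type*} [Group G] (y z : G) : G := z⁻¹ * y * z

/-- Iterated commutators: `E₀(g,h) = g`, `E_{c+1}(g,h) = [E_c(g,h), h]`. -/
def engel {G : Type*} [Group G] : ℕ → G → G → G
  | 0, g, _ => g
  | c + 1, g, h => comm (engel c g h) h

/-- `vStar v k` is the permutation `v*k` of `X*`: it maps `v ++ w` to `v ++ w^k`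
(with respect to the right action `rApp`) and fixes every word not having `v`
as a prefix. -/
def vStar [DecidableEq X] (v : List X) (k : Equiv.Perm (List X)) :
    Equiv.Perm (List X) where
  toFun w := if v <+: w then v ++ k (w.drop v.length) else w
  invFun w := if v <+: w then v ++ k.symm (w.drop v.length) else w
  left_inv w := by
    by_cases h : v <+: w
    · simp only [if_pos h, if_pos (List.prefix_append v _), List.drop_left,
        Equiv.symm_apply_apply]
      exact List.prefix_iff_eq_append.mp h
    · simp only [if_neg h]
  right_inv w := by
    by_cases h : v <+: w
    · simp only [if_pos h, if_pos (List.prefix_append v _), List.drop_left,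
        Equiv.apply_symm_apply]
      exact List.prefix_iff_eq_append.mp h
    · simp only [if_neg h]

end AutSG
namespace AutSG

/-- States of the Grigorchuk automaton: `a`, `b`, `c`, `d` and the identity state `e`. -/
inductive GrigQ | a | b | c | d | e
deriving DecidableEq

/-- Transition function of the Grigorchuk automaton (letter `1` is `0 : Fin 2`,
letter `2` is `1 : Fin 2`). -/
def grigδ : GrigQ → Fin 2 → GrigQ
  | .a, _ => .e
  | .b, 0 => .a
  | .b, _ => .c
  | .c, 0 => .a
  | .c, _ => .d
  | .d, 0 => .e
  | .d, _ => .b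
  | .e, _ => .e

/-- Output function of the Grigorchuk automaton: `a` swaps the two letters,
all other states act trivially on letters. -/
def grigOut : GrigQ → Fin 2 → Fin 2
  | .a, x => x + 1
  | _, x => x

theorem grigOut_bij : ∀ q, Function.Bijective (grigOut q) := by
  intro q; cases q <;> decide

/-- The generator `a` of the first Grigorchuk group: `(1w)^a = 2w`, `(2w)^a = 1w`. -/
noncomputable def ga : Equiv.Perm (List (Fin 2)) := genPerm grigδ grigOut grigOut_bij .a
/-- The generator `b`: `(1w)^b = 1(w^a)`, `(2w)^b = 2(w^c)`. -/
noncomputable def gb : Equiv.Perm (List (Fin 2)) := genPerm grigδ grigOut grigOut_bij .b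
/-- The generator `c`: `(1w)^c = 1(w^a)`, `(2w)^c = 2(w^d)`. -/
noncomputable def gc : Equiv.Perm (List (Fin 2)) := genPerm grigδ grigOut grigOut_bij .c
/-- The generator `d`: `(1w)^d = 1w`, `(2w)^d = 2(w^b)`. -/
noncomputable def gd : Equiv.Perm (List (Fin 2)) := genPerm grigδ grigOut grigOut_bij .d

/-- The first Grigorchuk group `G₀`, as the subgroup of the permutation group of
`{1,2}*` generated by `a`, `b`, `c`, `d`. -/
noncomputable def Grigorchuk : Subgroup (Equiv.Perm (List (Fin 2))) :=
  Subgroup.closure {ga, gb, gc, gd}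

namespace AutSG
namespace Grig
open GrigQ

/-- Action of a list of states (applied left-to-right) on a word. -/
def act (L : List GrigQ) (w : List (Fin 2)) : List (Fin 2) :=
  L.foldl (fun w q => mAct grigδ grigOut q w) w

theorem act_cons (q : GrigQ) (L : List GrigQ) (w : List (Fin 2)) :
    act (q :: L) w = act L (mAct grigδ grigOut q w) := rfl

theorem act_append (A B : List GrigQ) (w : List (Fin 2)) :
    act (A ++ B) w = act B (act A w) := by
  simp [act, List.foldl_append]

@[simp] theorem act_nil (w : List (Fin 2)) : act [] w = w := rfl

@[simp] theorem act_nil_word (L : List GrigQ) : act L [] = [] := by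
  induction L with
  | nil => rfl
  | cons q L ih => rw [act_cons]; exact ih

/-- Composite output function of a list of states. -/
def outL : List GrigQ → Fin 2 → Fin 2
  | [], x => x
  | q :: L, x => outL L (grigOut q x)

/-- Composite section (state list at a subtree) of a list of states. -/
def secL : List GrigQ → Fin 2 → List GrigQ
  | [], _ => []
  | q :: L, x => grigδ q x :: secL L (grigOut q x)

theorem act_word_cons (L : List GrigQ) (x : Fin 2) (w : List (Fin 2)) :
    act L (x :: w) = outL L x :: act (secL L x) w := by
  induction L generalizing x w with
  | nil => rfl
  | cons q L ih =>
    rw [act_cons, show mAct grigδ grigOut q (x :: w)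
      = grigOut q x :: mAct grigδ grigOut (grigδ q x) w from rfl, ih]
    rfl

@[simp] theorem secL_length (L : List GrigQ) (x : Fin 2) :
    (secL L x).length = L.length := by
  induction L generalizing x with
  | nil => rfl
  | cons q L ih => simp [secL, ih]

theorem outL_append (A B : List GrigQ) (x : Fin 2) :
    outL (A ++ B) x = outL B (outL A x) := by
  induction A generalizing x with
  | nil => rfl
  | cons q A ih => simp [outL, ih]

theorem secL_append (A B : List GrigQ) (x : Fin 2) :
    secL (A ++ B) x = secL A x ++ secL B (outL A x) := by
  induction A generalizing x with
  | nil => rfl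
  | cons q A ih => simp [secL, outL, ih]

theorem fin2 (x : Fin 2) : x = 0 ∨ x = 1 := by revert x; decide

instance : Fintype GrigQ where
  elems := {GrigQ.a, .b, .c, .d, .e}
  complete := by intro q; cases q <;> decide

theorem grigOut_add (q : GrigQ) (x : Fin 2) : grigOut q (x + 1) = grigOut q x + 1 := by
  revert q x; decide

theorem outL_add (L : List GrigQ) (x : Fin 2) : outL L x = x + outL L 0 := by
  induction L generalizing x with
  | nil => simp [outL]
  | cons q L ih =>
    have h1 : grigOut q x = x + grigOut q 0 := by
      rcases fin2 x with rfl | rfl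
      · simp
      · have := grigOut_add q 0; simp at this ⊢; rw [this]; abel
    rw [outL, outL, h1, ih (x + grigOut q 0), ih (grigOut q 0)]
    abel

/-- `L` acts as the identity on all words. -/
def Triv (L : List GrigQ) : Prop := ∀ w, act L w = w

/-- concatenated power of a word -/
def rep (m : ℕ) (L : List GrigQ) : List GrigQ := (List.replicate m L).flatten

theorem act_rep (m : ℕ) (L : List GrigQ) (w : List (Fin 2)) :
    act (rep m L) w = (act L)^[m] w := by
  induction m generalizing w with
  | zero => rfl
  | succ m ih =>
    rw [show rep (m+1) L = L ++ rep m L from by simp [rep, List.replicate_succ]]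
    rw [act_append, ih, ← Function.iterate_succ_apply]

end Grig
end AutSG
namespace AutSG
namespace Grig
open GrigQ

/-- A set of state-words closed under sections with trivial outputs. -/
def goodSet (S : List (List GrigQ)) : Prop :=
  ∀ M ∈ S, (outL M 0 = 0 ∧ outL M 1 = 1) ∧ (secL M 0 ∈ S ∧ secL M 1 ∈ S)

instance : DecidablePred goodSet := fun S =>
  List.decidableBAll _ S

theorem triv_of_good {S : List (List GrigQ)} (hS : goodSet S) :
    ∀ L ∈ S, Triv L := by
  intro L hL w
  induction w generalizing L with
  | nil => simp
  | cons x w ih =>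
    rw [act_word_cons]
    obtain ⟨⟨h0, h1⟩, hs0, hs1⟩ := hS L hL
    rcases fin2 x with rfl | rfl
    · rw [h0, ih _ hs0]
    · rw [h1, ih _ hs1]

/-- fueled closure under sections -/
def closC : ℕ → List (List GrigQ) → List (List GrigQ)
  | 0, S => S
  | n + 1, S => closC n ((S ++ S.flatMap (fun M => [secL M 0, secL M 1])).dedup)

/-- Klein four-group multiplication on `{b,c,d}` (junk elsewhere). -/
def mulK : GrigQ → GrigQ → GrigQ
  | .b, .b => .e
  | .b, .c => .d
  | .b, .d => .c
  | .c, .b => .d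
  | .c, .c => .e
  | .c, .d => .b
  | .d, .b => .c
  | .d, .c => .b
  | .d, .d => .e
  | _, _ => .e

def baseIds : List (List GrigQ) :=
  [[.e], [.a,.a], [.b,.b], [.c,.c], [.d,.d], [.e,.e]] ++
  ((fun q r => [q, r, mulK q r]) <$> [GrigQ.b, .c, .d] <*> [GrigQ.b, .c, .d])

theorem baseIds_triv : ∀ L ∈ baseIds, Triv L := by
  have h : goodSet (closC 12 baseIds) ∧ ∀ L ∈ baseIds, L ∈ closC 12 baseIds := by decide
  exact fun L hL => triv_of_good h.1 L (h.2 L hL)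

theorem triv_qq (q : GrigQ) : Triv [q, q] := by
  cases q <;> exact baseIds_triv _ (by decide)

theorem triv_e : Triv [.e] := baseIds_triv _ (by decide)

theorem act_e (w : List (Fin 2)) : mAct grigδ grigOut .e w = w := triv_e w

theorem act_single (q : GrigQ) (w : List (Fin 2)) :
    act [q] w = mAct grigδ grigOut q w := rfl

theorem isKlein_iff (q : GrigQ) : (q ≠ .a ∧ q ≠ .e) ↔ q = .b ∨ q = .c ∨ q = .d := by
  cases q <;> simp

theorem mulK_act {q r : GrigQ} (hq : q ≠ .a ∧ q ≠ .e) (hr : r ≠ .a ∧ r ≠ .e)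
    (w : List (Fin 2)) : act [mulK q r] w = act [r] (act [q] w) := by
  have h3 : Triv [q, r, mulK q r] := by
    rcases (isKlein_iff q).1 hq with rfl | rfl | rfl <;>
      rcases (isKlein_iff r).1 hr with rfl | rfl | rfl <;>
      exact baseIds_triv _ (by decide)
  have hss : Triv [mulK q r, mulK q r] := triv_qq _
  have h1 : act [mulK q r] (act [r] (act [q] w)) = w := by
    have := h3 w
    rwa [show ([q, r, mulK q r] : List GrigQ) = [q] ++ [r] ++ [mulK q r] from rfl,
      act_append, act_append] at this
  have h2 : ∀ v, act [mulK q r] (act [mulK q r] v) = v := fun v => by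
    have := hss v
    rwa [show ([mulK q r, mulK q r] : List GrigQ) = [mulK q r] ++ [mulK q r] from rfl,
      act_append] at this
  conv_lhs => rw [← h1]
  exact h2 _

end Grig
end AutSG
namespace AutSG
namespace Grig
open GrigQ

/-- alternation predicate -/
def altP (p q : GrigQ) : Prop := (p = .a) ↔ (q ≠ .a)

instance : DecidableRel altP := fun p q => by unfold altP; infer_instance

/-- reduced word: no `e`, alternating between `a` and Klein letters -/
def IsRed (L : List GrigQ) : Prop := (.e ∉ L) ∧ L.Chain' altP

instance : DecidablePred IsRed := fun L => by unfold IsRed List.Chain'; infer_instance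

/-- insert a letter in front of a reduced word, reducing -/
def ins (q : GrigQ) (R : List GrigQ) : List GrigQ :=
  if q = .e then R else
  match R with
  | [] => [q]
  | r :: R' =>
    if q = .a then (if r = .a then R' else q :: r :: R')
    else (if r = .a then q :: r :: R' else ins (mulK q r) R')

/-- the reduction of a word -/
def red (L : List GrigQ) : List GrigQ := L.foldr ins []

theorem red_cons (q : GrigQ) (L : List GrigQ) : red (q :: L) = ins q (red L) := rfl

theorem ins_nil (q : GrigQ) : ins q [] = if q = .e then [] else [q] := by
  by_cases h : q = .e <;> simp [ins, h]

theorem ins_cons (q r : GrigQ) (R' : List GrigQ) :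
    ins q (r :: R') = if q = .e then r :: R'
      else if q = .a then (if r = .a then R' else q :: r :: R')
      else (if r = .a then q :: r :: R' else ins (mulK q r) R') := by
  by_cases h : q = .e <;> simp [ins, h]

theorem mulK_not_ae {q r : GrigQ} (hq : q ≠ .a ∧ q ≠ .e) (hr : r ≠ .a ∧ r ≠ .e) :
    mulK q r ≠ .a := by
  rcases (isKlein_iff q).1 hq with rfl | rfl | rfl <;>
    rcases (isKlein_iff r).1 hr with rfl | rfl | rfl <;> decide

theorem isRed_ins (q : GrigQ) (R : List GrigQ) (hR : IsRed R) : IsRed (ins q R) := by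
  induction R generalizing q with
  | nil =>
    rw [ins_nil]
    by_cases h : q = .e
    · rw [if_pos h]; exact hR
    · rw [if_neg h]
      exact ⟨fun hm => h (List.mem_singleton.1 hm).symm, List.isChain_singleton q⟩
  | cons r R' ih =>
    obtain ⟨he, hch⟩ := hR
    have her : r ≠ .e := fun h => he (by simp [h])
    have heR' : IsRed R' := ⟨fun h => he (List.mem_cons_of_mem _ h), hch.tail⟩
    rw [ins_cons]
    by_cases hqe : q = .e
    · rw [if_pos hqe]; exact ⟨he, hch⟩
    rw [if_neg hqe]
    by_cases hqa : q = .a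
    · rw [if_pos hqa]
      by_cases hra : r = .a
      · rw [if_pos hra]; exact heR'
      · rw [if_neg hra]
        exact ⟨by simp [Ne.symm hqe, he], List.isChain_cons_cons.2 ⟨by simp [altP, hqa, hra], hch⟩⟩
    · rw [if_neg hqa]
      by_cases hra : r = .a
      · rw [if_pos hra]
        exact ⟨by simp [Ne.symm hqe, he], List.isChain_cons_cons.2 ⟨by simp [altP, hqa, hra], hch⟩⟩
      · rw [if_neg hra]
        exact ih _ heR'

theorem isRed_red (L : List GrigQ) : IsRed (red L) := by
  induction L with
  | nil => exact ⟨List.not_mem_nil, List.isChain_nil⟩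
  | cons q L ih => exact isRed_ins q _ ih

theorem ins_act (q : GrigQ) (R : List GrigQ) (hR : IsRed R) (w : List (Fin 2)) :
    act (ins q R) w = act R (act [q] w) := by
  induction R generalizing q w with
  | nil =>
    rw [ins_nil]
    by_cases h : q = .e
    · rw [if_pos h, h, act_single, act_e]
    · rw [if_neg h]; rfl
  | cons r R' ih =>
    obtain ⟨he, hch⟩ := hR
    have her : r ≠ .e := fun h => he (by simp [h])
    have heR' : IsRed R' := ⟨fun h => he (List.mem_cons_of_mem _ h), hch.tail⟩
    rw [ins_cons]
    by_cases hqe : q = .e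
    · rw [if_pos hqe, hqe, act_single, act_e]
    rw [if_neg hqe]
    by_cases hqa : q = .a
    · rw [if_pos hqa]
      by_cases hra : r = .a
      · rw [if_pos hra]
        subst hqa; subst hra
        rw [show ((GrigQ.a : GrigQ) :: R') = [GrigQ.a] ++ R' from rfl, act_append]
        have h2 : act [GrigQ.a] (act [GrigQ.a] w) = w := by
          have := triv_qq GrigQ.a w
          rwa [show ([GrigQ.a, .a] : List GrigQ) = [GrigQ.a] ++ [GrigQ.a] from rfl,
            act_append] at this
        rw [h2]
      · rw [if_neg hra]; rfl
    · rw [if_neg hqa]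
      by_cases hra : r = .a
      · rw [if_pos hra]; rfl
      · rw [if_neg hra]
        rw [ih _ heR', mulK_act ⟨hqa, hqe⟩ ⟨hra, her⟩]
        rw [show (r :: R') = [r] ++ R' from rfl, act_append]

theorem act_red (L : List GrigQ) (w : List (Fin 2)) : act (red L) w = act L w := by
  induction L generalizing w with
  | nil => rfl
  | cons q L ih =>
    rw [red_cons, ins_act q _ (isRed_red L), ih]; rfl

end Grig
end AutSG
namespace AutSG
namespace Grig
open GrigQ

def nonE (L : List GrigQ) : ℕ := L.countP (fun q => !(q == GrigQ.e))
def aCnt (L : List GrigQ) : ℕ := L.countP (fun q => q == GrigQ.a)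
def kCnt (L : List GrigQ) : ℕ := L.countP (fun q => !(q == GrigQ.a) && !(q == GrigQ.e))
def wgt : GrigQ → ℕ | .a => 0 | .b => 2 | .c => 2 | .d => 1 | .e => 0
def wSum (L : List GrigQ) : ℕ := (L.map wgt).sum

theorem ka_le_len (L : List GrigQ) : kCnt L + aCnt L ≤ L.length := by
  induction L with
  | nil => simp [kCnt, aCnt]
  | cons q L ih =>
    simp only [kCnt, aCnt, List.countP_cons, List.length_cons] at *
    cases q <;> simp <;> omega

theorem alt_bound_aux (L : List GrigQ) (hch : L.Chain' altP) :
    kCnt L ≤ aCnt L + (if L.head? = some .a then 0 else 1) := by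
  induction L with
  | nil => simp [kCnt, aCnt]
  | cons q M ih =>
    have hM : M.Chain' altP := hch.tail
    by_cases hq : q = .a
    · subst hq
      have := ih hM
      simp only [kCnt, aCnt, List.countP_cons] at *
      simp
      split at this <;> omega
    · have hM' : kCnt M ≤ aCnt M := by
        cases M with
        | nil => simp [kCnt, aCnt]
        | cons s M' =>
          have hrel : altP q s := (List.isChain_cons_cons.1 hch).1
          have hs : s = .a := by
            by_contra hs
            exact hq (hrel.2 hs)
          have := ih hM
          rw [if_pos (by simp [hs])] at this
          omega
      simp only [kCnt, aCnt, List.countP_cons] at hM' ⊢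
      have h1 : (if (q == GrigQ.a) = true then 1 else 0) = 0 := by simp [hq]
      have h2 : (if (!(q == GrigQ.a) && !(q == GrigQ.e)) = true then 1 else 0) ≤ 1 := by
        split <;> omega
      have hhead : ¬((q :: M).head? = some GrigQ.a) := by simpa using hq
      rw [if_neg hhead]
      omega

theorem alt_bound (L : List GrigQ) (hch : L.Chain' altP) (hh : L.head? = some .a) :
    2 * kCnt L ≤ L.length := by
  have h1 := alt_bound_aux L hch
  rw [if_pos hh] at h1
  have := ka_le_len L
  omega

theorem aCnt_pos (L : List GrigQ) (hh : L.head? = some .a) : 1 ≤ aCnt L := by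
  cases L with
  | nil => simp at hh
  | cons q M =>
    obtain rfl : q = .a := by simpa using hh
    simp [aCnt, List.countP_cons]

theorem nonE_eq_len (L : List GrigQ) (he : GrigQ.e ∉ L) : nonE L = L.length := by
  apply List.countP_eq_length.2
  intro q hq
  simp only [Bool.not_eq_true', beq_eq_false_iff_ne]
  exact fun h => he (h ▸ hq)

theorem nonE_append (A B : List GrigQ) : nonE (A ++ B) = nonE A + nonE B :=
  List.countP_append

theorem nonE_le_len (L : List GrigQ) : nonE L ≤ L.length := List.countP_le_length

-- length / filter spec of ins
theorem ins_len (R : List GrigQ) (q : GrigQ) :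
    (ins q R).length ≤ R.length + (if q = .e then 0 else 1) ∧
    ((ins q R).length = R.length + (if q = .e then 0 else 1) →
      ins q R = if q = .e then R else q :: R) := by
  induction R generalizing q with
  | nil =>
    rw [ins_nil]
    by_cases h : q = .e <;> simp [h]
  | cons r R' ih =>
    rw [ins_cons]
    by_cases hqe : q = .e
    · simp [hqe]
    rw [if_neg hqe, if_neg hqe]
    by_cases hqa : q = .a
    · rw [if_pos hqa]
      by_cases hra : r = .a
      · rw [if_pos hra]
        constructor
        · simp [if_neg hqe]; omega
        · intro h; simp [if_neg hqe] at h; omega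
      · rw [if_neg hra]; simp [if_neg hqe]
    · rw [if_neg hqa]
      by_cases hra : r = .a
      · rw [if_pos hra]; simp [if_neg hqe]
      · rw [if_neg hra]
        have h1 := (ih (mulK q r)).1
        constructor
        · have : (ins (mulK q r) R').length ≤ R'.length + 1 := by
            split at h1 <;> omega
          simp only [List.length_cons]; omega
        · intro h
          exfalso
          have : (ins (mulK q r) R').length ≤ R'.length + 1 := by
            split at h1 <;> omega
          simp only [List.length_cons] at h; omega

theorem red_len (L : List GrigQ) :
    (red L).length ≤ nonE L ∧
    ((red L).length = nonE L → red L = L.filter (fun q => !(q == GrigQ.e))) := by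
  induction L with
  | nil => simp [red, nonE]
  | cons q L ih =>
    rw [red_cons]
    have h1 := ins_len (red L) q
    have hcnt : nonE (q :: L) = nonE L + (if q = .e then 0 else 1) := by
      simp only [nonE, List.countP_cons]
      by_cases h : q = .e <;> simp [h]
    constructor
    · calc (ins q (red L)).length ≤ (red L).length + (if q = .e then 0 else 1) := h1.1
        _ ≤ nonE L + (if q = .e then 0 else 1) := by have := ih.1; omega
        _ = nonE (q :: L) := hcnt.symm
    · intro h
      have hred : (red L).length = nonE L := by
        have := h1.1; have := ih.1; omega
      have hfil := ih.2 hred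
      have hins := h1.2 (by omega)
      rw [hins, hfil]
      by_cases hq : q = .e <;> simp [hq]

-- sections: counting
theorem nonE_secL_pair (L : List GrigQ) (x : Fin 2) :
    nonE (secL L x) + nonE (secL L (x + 1)) = wSum L := by
  induction L generalizing x with
  | nil => simp [secL, nonE, wSum]
  | cons q L ih =>
    simp only [secL, nonE, List.countP_cons, wSum, List.map_cons, List.sum_cons,
      grigOut_add q x]
    have ihh := ih (grigOut q x)
    simp only [nonE, wSum] at ihh
    have hq : ∀ (p : GrigQ) (y : Fin 2), (if (!(grigδ p y == GrigQ.e)) = true then 1 else 0) +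
        (if (!(grigδ p (y+1) == GrigQ.e)) = true then 1 else 0) = wgt p := by decide
    have := hq q x
    omega

theorem nonE_secL_le (L : List GrigQ) (x : Fin 2) : nonE (secL L x) ≤ kCnt L := by
  induction L generalizing x with
  | nil => simp [secL, nonE, kCnt]
  | cons q L ih =>
    simp only [secL, nonE, kCnt, List.countP_cons]
    have ihh := ih (grigOut q x)
    simp only [nonE, kCnt] at ihh
    have hq : ∀ (p : GrigQ) (y : Fin 2), (if (!(grigδ p y == GrigQ.e)) = true then 1 else 0) ≤
        (if (!(p == GrigQ.a) && !(p == GrigQ.e)) = true then 1 else 0) := by decide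
    have := hq q x
    omega

theorem wSum_le (L : List GrigQ) : wSum L ≤ 2 * kCnt L := by
  induction L with
  | nil => simp [wSum, kCnt]
  | cons q L ih =>
    simp only [wSum, kCnt, List.map_cons, List.sum_cons, List.countP_cons] at *
    have hq : ∀ (p : GrigQ), wgt p ≤ 2 * (if (!(p == GrigQ.a) && !(p == GrigQ.e)) = true then 1 else 0) := by decide
    have := hq q
    omega

theorem wSum_d (L : List GrigQ) (hd : GrigQ.d ∈ L) : wSum L + 1 ≤ 2 * kCnt L := by
  induction L with
  | nil => simp at hd
  | cons q L ih =>
    simp only [wSum, kCnt, List.map_cons, List.sum_cons, List.countP_cons]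
    rcases List.mem_cons.1 hd with rfl | hd'
    · have h1 : wgt GrigQ.d + 1 ≤ 2 * (if (!(GrigQ.d == GrigQ.a) && !(GrigQ.d == GrigQ.e)) = true then 1 else 0) := by decide
      have h2 := wSum_le L
      simp only [wSum, kCnt] at h2
      omega
    · have h1 := ih hd'
      simp only [wSum, kCnt] at h1
      have hq : ∀ (p : GrigQ), wgt p ≤ 2 * (if (!(p == GrigQ.a) && !(p == GrigQ.e)) = true then 1 else 0) := by decide
      have := hq q
      omega

theorem mem_pair (p : GrigQ) (L : List GrigQ) (hp : p ∈ L) (x : Fin 2) :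
    grigδ p 1 ∈ secL L x ∨ grigδ p 1 ∈ secL L (x + 1) := by
  induction L generalizing x with
  | nil => simp at hp
  | cons q L ih =>
    rcases List.mem_cons.1 hp with rfl | hp'
    · rcases fin2 x with rfl | rfl
      · right
        simp only [secL]
        exact List.mem_cons_self
      · left
        simp only [secL]
        exact List.mem_cons_self
    · rcases ih hp' (grigOut q x) with h | h
      · left; simp only [secL]; exact List.mem_cons_of_mem _ h
      · right
        simp only [secL, grigOut_add]
        exact List.mem_cons_of_mem _ h

theorem mem_sec (q' : GrigQ) (L : List GrigQ) (x : Fin 2) (h : q' ∈ secL L x) :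
    ∃ p ∈ L, ∃ y, grigδ p y = q' := by
  induction L generalizing x with
  | nil => simp [secL] at h
  | cons q L ih =>
    simp only [secL] at h
    rcases List.mem_cons.1 h with rfl | h'
    · exact ⟨q, List.mem_cons_self, x, rfl⟩
    · obtain ⟨p, hpL, y, hy⟩ := ih _ h'
      exact ⟨p, List.mem_cons_of_mem _ hpL, y, hy⟩

end Grig
end AutSG
namespace AutSG
namespace Grig
open GrigQ

theorem act_bijective (L : List GrigQ) : Function.Bijective (act L) := by
  induction L with
  | nil => exact Function.bijective_id
  | cons q L ih =>
    have : act (q :: L) = act L ∘ mAct grigδ grigOut q := rfl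
    rw [this]
    exact ih.comp (mAct_bijective _ _ grigOut_bij q)

/-- `L` has order dividing a power of two. -/
def HasOrd2 (L : List GrigQ) : Prop := ∃ k : ℕ, (act L)^[2 ^ k] = id

theorem iter_mono {α : Type*} {f : α → α} {k K : ℕ} (h : f^[2^k] = id) (hkK : k ≤ K) :
    f^[2^K] = id := by
  have h2 : 2^K = 2^k * 2^(K - k) := by rw [← pow_add]; congr 1; omega
  rw [h2, Function.iterate_mul, h, Function.iterate_id]

theorem hasOrd2_congr {L M : List GrigQ} (h : ∀ w, act L w = act M w) :
    HasOrd2 M → HasOrd2 L := by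
  rintro ⟨k, hk⟩
  exact ⟨k, by rw [funext h]; exact hk⟩

theorem swap_ord {A B : List GrigQ} (h : HasOrd2 (A ++ B)) : HasOrd2 (B ++ A) := by
  obtain ⟨k, hk⟩ := h
  refine ⟨k, ?_⟩
  have hAB : act (A ++ B) = act B ∘ act A := funext (act_append A B)
  have hBA : act (B ++ A) = act A ∘ act B := funext (act_append B A)
  rw [hAB] at hk
  rw [hBA]
  set f := act A
  set g := act B
  have hsc : Function.Semiconj g (f ∘ g) (g ∘ f) := fun x => rfl
  have hit := hsc.iterate_right (2^k)
  funext x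
  have h1 : g ((f ∘ g)^[2^k] x) = (g ∘ f)^[2^k] (g x) := hit x
  rw [hk] at h1
  exact (act_bijective B).1 h1

theorem outL_all (L : List GrigQ) (h0 : outL L 0 = 0) (x : Fin 2) : outL L x = x := by
  rw [outL_add, h0, add_zero]

theorem outL_rep (m : ℕ) (L : List GrigQ) (h0 : ∀ x, outL L x = x) (x : Fin 2) :
    outL (rep m L) x = x := by
  induction m generalizing x with
  | zero => rfl
  | succ m ih =>
    rw [show rep (m+1) L = L ++ rep m L from by simp [rep, List.replicate_succ],
      outL_append, h0, ih]

theorem secL_rep (m : ℕ) (L : List GrigQ) (h0 : ∀ x, outL L x = x) (x : Fin 2) :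
    secL (rep m L) x = rep m (secL L x) := by
  induction m generalizing x with
  | zero => rfl
  | succ m ih =>
    rw [show rep (m+1) L = L ++ rep m L from by simp [rep, List.replicate_succ],
      secL_append, h0, ih,
      show rep (m+1) (secL L x) = secL L x ++ rep m (secL L x) from by
        simp [rep, List.replicate_succ]]

theorem triv_of_sections (L : List GrigQ) (h0 : ∀ x, outL L x = x) (m : ℕ)
    (hs : ∀ x w, act (rep m (secL L x)) w = w) (w : List (Fin 2)) :
    act (rep m L) w = w := by
  cases w with
  | nil => simp
  | cons x w =>
    rw [act_word_cons, outL_rep m L h0, secL_rep m L h0, hs]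

theorem even_lift (L : List GrigQ) (h0 : outL L 0 = 0)
    (hs : ∀ x, HasOrd2 (secL L x)) : HasOrd2 L := by
  have h0' := outL_all L h0
  obtain ⟨k0, hk0⟩ := hs 0
  obtain ⟨k1, hk1⟩ := hs 1
  set K := max k0 k1 with hK
  have hx : ∀ x : Fin 2, (act (secL L x))^[2^K] = id := by
    intro x
    rcases fin2 x with rfl | rfl
    · exact iter_mono hk0 (le_max_left _ _)
    · exact iter_mono hk1 (le_max_right _ _)
  refine ⟨K, ?_⟩
  funext w
  have := triv_of_sections L h0' (2^K)
    (fun x w => by rw [act_rep]; rw [hx x]; rfl) w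
  rwa [act_rep] at this

theorem swap_lift (L : List GrigQ) (h1 : outL L 0 = 1)
    (hX : HasOrd2 (secL L 0 ++ secL L 1)) : HasOrd2 L := by
  have hflip : ∀ x : Fin 2, x + 1 + 1 = x := by decide
  have hLx : ∀ x, outL L x = x + 1 := fun x => by rw [outL_add, h1]
  have hM0 : outL (L ++ L) 0 = 0 := by
    rw [outL_append, hLx, hLx]
    exact hflip 0
  have hsec0 : secL (L ++ L) 0 = secL L 0 ++ secL L 1 := by
    rw [secL_append]
    congr 1
    rw [hLx]; rfl
  have hsec1 : secL (L ++ L) 1 = secL L 1 ++ secL L 0 := by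
    rw [secL_append]
    congr 1
    rw [hLx, show (1 : Fin 2) + 1 = 0 from by decide]
  have hM : HasOrd2 (L ++ L) := by
    apply even_lift _ hM0
    intro x
    rcases fin2 x with rfl | rfl
    · rw [hsec0]; exact hX
    · rw [hsec1]; exact swap_ord hX
  obtain ⟨j, hj⟩ := hM
  refine ⟨j + 1, ?_⟩
  have hMact : act (L ++ L) = act L ∘ act L := funext (act_append L L)
  have h2 : (act L)^[2] = act L ∘ act L := by
    funext w; simp [Function.iterate_succ_apply]
  rw [pow_succ', Function.iterate_mul, h2, ← hMact, hj]

end Grig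
end AutSG
namespace AutSG
namespace Grig
open GrigQ

def rank (L : List GrigQ) : ℕ := if GrigQ.d ∈ L then 0 else if GrigQ.c ∈ L then 1 else 2

def msr (L : List GrigQ) : ℕ := 3 * L.length + rank L

theorem rank_le (L : List GrigQ) : rank L ≤ 2 := by
  unfold rank; split_ifs <;> omega

theorem rank_congr {L L' : List GrigQ} (hd : (GrigQ.d ∈ L) ↔ (GrigQ.d ∈ L'))
    (hc : (GrigQ.c ∈ L) ↔ (GrigQ.c ∈ L')) : rank L = rank L' := by
  unfold rank; split_ifs <;> tauto

theorem fin01 : (0 : Fin 2) + 1 = 1 := by decide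

/-- the main argument, for reduced words starting with `a` -/
theorem coreA (N : ℕ) (IH : ∀ L', IsRed L' → msr L' < N → HasOrd2 L')
    (L : List GrigQ) (hL : IsRed L) (hN : msr L ≤ N) (hhead : L.head? = some GrigQ.a) :
    HasOrd2 L := by
  set n := L.length with hn
  by_cases hout : outL L 0 = 0
  · -- even case : L stabilizes the first level
    apply even_lift L hout
    intro x
    have hb : (red (secL L x)).length ≤ kCnt L :=
      le_trans (red_len _).1 (nonE_secL_le L x)
    have hkc : kCnt L + 1 ≤ n := by
      have h1 := ka_le_len L
      have h2 := aCnt_pos L hhead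
      omega
    have hmsr : msr (red (secL L x)) < N := by
      have hr := rank_le (red (secL L x))
      have e1 : msr (red (secL L x)) = 3 * (red (secL L x)).length + rank (red (secL L x)) := rfl
      have e2 : msr L = 3 * L.length + rank L := rfl
      omega
    exact hasOrd2_congr (fun w => (act_red _ w).symm) (IH _ (isRed_red _) hmsr)
  · -- odd case : L swaps the first level
    have hout1 : outL L 0 = 1 := by
      rcases fin2 (outL L 0) with h | h
      · exact absurd h hout
      · exact h
    set X := secL L 0 ++ secL L 1 with hX
    have hpair : nonE X = wSum L := by
      rw [hX, nonE_append]
      have := nonE_secL_pair L 0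
      rwa [fin01] at this
    have hle := (red_len X).1
    have h2k : 2 * kCnt L ≤ n := alt_bound L hL.2 hhead
    have hwk := wSum_le L
    suffices hred : msr (red X) < msr L by
      have hX2 : HasOrd2 X :=
        hasOrd2_congr (fun w => (act_red X w).symm)
          (IH _ (isRed_red _) (lt_of_lt_of_le hred hN))
      exact swap_lift L hout1 hX2
    have e2 : msr L = 3 * L.length + rank L := rfl
    have e1 : msr (red X) = 3 * (red X).length + rank (red X) := rfl
    have hr := rank_le (red X)
    by_cases hd : GrigQ.d ∈ L
    · have hwd := wSum_d L hd
      have hrd : rank L = 0 := if_pos hd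
      omega
    · by_cases hc : GrigQ.c ∈ L
      · have hrk : rank L = 1 := by unfold rank; rw [if_neg hd, if_pos hc]
        rcases lt_or_eq_of_le hle with hlt | heq
        · omega
        · have hfil := (red_len X).2 heq
          have hdX : GrigQ.d ∈ X := by
            rcases mem_pair GrigQ.c L hc 0 with h | h
            · exact List.mem_append_left _ h
            · rw [fin01] at h
              exact List.mem_append_right _ h
          have hdred : GrigQ.d ∈ red X := by
            rw [hfil]
            exact List.mem_filter.2 ⟨hdX, by decide⟩
          have hr0 : rank (red X) = 0 := if_pos hdred
          omega
      · -- only a's and b's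
        rcases lt_or_eq_of_le hle with hlt | heq
        · omega
        · have hfil := (red_len X).2 heq
          by_cases hsmall : nonE X + 1 ≤ n
          · omega
          · -- nonE X = n, so 2 * kCnt L = n ≥ wSum = n and there is a b in L
            have hnX : nonE X = n := by omega
            have hn1 : 1 ≤ L.length := by
              cases L with
              | nil => simp at hhead
              | cons => simp
            have hkpos : 0 < kCnt L := by omega
            obtain ⟨p, hpL, hpk⟩ := List.countP_pos_iff.1 hkpos
            have hpb : p = GrigQ.b := by
              have h1 : p ≠ GrigQ.a ∧ p ≠ GrigQ.e := by
                constructor <;> intro h <;> subst h <;> simp at hpk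
              have h2 : p ≠ GrigQ.d := fun h => hd (h ▸ hpL)
              have h3 : p ≠ GrigQ.c := fun h => hc (h ▸ hpL)
              cases p <;> simp_all
            subst hpb
            have hcX : GrigQ.c ∈ X := by
              rcases mem_pair GrigQ.b L hpL 0 with h | h
              · exact List.mem_append_left _ h
              · rw [fin01] at h
                exact List.mem_append_right _ h
            have hcred : GrigQ.c ∈ red X := by
              rw [hfil]
              exact List.mem_filter.2 ⟨hcX, by decide⟩
            have hr1 : rank (red X) ≤ 1 := by
              unfold rank
              split_ifs <;> simp_all
            have hrk : rank L = 2 := by unfold rank; rw [if_neg hd, if_neg hc]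
            omega

theorem core : ∀ N L, IsRed L → msr L ≤ N → HasOrd2 L := by
  intro N
  induction N using Nat.strong_induction_on with
  | _ N IH =>
    have IH' : ∀ L', IsRed L' → msr L' < N → HasOrd2 L' :=
      fun L' h1 h2 => IH (msr L') h2 L' h1 le_rfl
    intro L hL hN
    match L with
    | [] => exact ⟨0, funext fun w => by simp⟩
    | [q] =>
      refine ⟨1, funext fun w => ?_⟩
      have h := triv_qq q w
      rw [show ([q,q] : List GrigQ) = [q] ++ [q] from rfl, act_append] at h
      show (act [q])^[2] w = w
      rw [Function.iterate_succ_apply, Function.iterate_one]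
      exact h
    | q :: r :: rest =>
      by_cases hq : q = GrigQ.a
      · exact coreA N IH' _ hL hN (by rw [hq]; rfl)
      · have hne : q ≠ GrigQ.e := fun h => hL.1 (by rw [h]; exact List.mem_cons_self)
        have hra : r = GrigQ.a := by
          have hrel : altP q r := (List.isChain_cons_cons.1 hL.2).1
          by_contra hr
          exact hq (hrel.2 hr)
        have hrot : HasOrd2 ((r :: rest) ++ [q]) → HasOrd2 (q :: r :: rest) := by
          intro h
          have := swap_ord (A := r :: rest) (B := [q]) h
          exact this
        set Z := (r :: rest) ++ [q] with hZ
        have hlen : Z.length = (q :: r :: rest).length := by simp [hZ]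
        have hrkZ : rank Z = rank (q :: r :: rest) := by
          apply rank_congr <;> simp [hZ, List.mem_append] <;> tauto
        by_cases hZr : IsRed Z
        · apply hrot
          apply coreA N IH' Z hZr
          · rw [show msr Z = msr (q :: r :: rest) from by unfold msr; rw [hlen, hrkZ]]
            exact hN
          · rw [hZ, hra]; rfl
        · -- Z is not reduced, so its reduction is strictly shorter
          have heZ : GrigQ.e ∉ Z := by
            intro h
            rcases List.mem_append.1 h with h | h
            · exact hL.1 (List.mem_cons_of_mem _ h)
            · have : GrigQ.e = q := List.mem_singleton.1 h
              exact hne this.symm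
          have hlenred : (red Z).length < Z.length := by
            rcases lt_or_eq_of_le (red_len Z).1 with h | h
            · have := nonE_le_len Z; omega
            · exfalso
              have hfil := (red_len Z).2 h
              have : red Z = Z := by
                rw [hfil]
                apply List.filter_eq_self.2
                intro z hz
                simp only [Bool.not_eq_true', beq_eq_false_iff_ne]
                exact fun hh => heZ (hh ▸ hz)
              exact hZr (this ▸ isRed_red Z)
          have hmsr : msr (red Z) < N := by
            have h1 := rank_le (red Z)
            have h2 : 3 * (q :: r :: rest).length ≤ msr (q :: r :: rest) := by
              unfold msr; omega
            unfold msr at *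
            rw [hlen] at hlenred
            omega
          apply hrot
          exact hasOrd2_congr (fun w => (act_red Z w).symm) (IH' _ (isRed_red _) hmsr)

theorem allOrd2 (L : List GrigQ) : HasOrd2 L :=
  hasOrd2_congr (fun w => (act_red L w).symm)
    (core (msr (red L)) (red L) (isRed_red L) le_rfl)

end Grig
end AutSG
namespace AutSG
namespace Grig
open GrigQ

noncomputable def gp (q : GrigQ) : Equiv.Perm (List (Fin 2)) :=
  genPerm grigδ grigOut grigOut_bij q

noncomputable def P (L : List GrigQ) : Equiv.Perm (List (Fin 2)) := (L.map gp).prod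

theorem P_single (q : GrigQ) : P [q] = gp q := by simp [P]

theorem P_cons (q : GrigQ) (L : List GrigQ) : P (q :: L) = gp q * P L := by
  simp [P]

theorem P_append (A B : List GrigQ) : P (A ++ B) = P A * P B := by
  simp [P]

theorem rApp_gp (q : GrigQ) (w : List (Fin 2)) :
    rApp (gp q) w = mAct grigδ grigOut q w := rApp_genPerm _ _ _ _ _

theorem rApp_mul (g h : Equiv.Perm (List (Fin 2))) (w : List (Fin 2)) :
    rApp (g * h) w = rApp h (rApp g w) := by
  simp [rApp, mul_inv_rev, Equiv.Perm.mul_apply]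

theorem rApp_one (w : List (Fin 2)) : rApp (1 : Equiv.Perm (List (Fin 2))) w = w := by
  simp [rApp]

theorem rApp_P (L : List GrigQ) (w : List (Fin 2)) : rApp (P L) w = act L w := by
  induction L generalizing w with
  | nil => simp [P, rApp]
  | cons q L ih =>
    rw [P_cons, rApp_mul, rApp_gp, ih]
    rfl

theorem perm_ext {g h : Equiv.Perm (List (Fin 2))} (hw : ∀ w, rApp g w = rApp h w) :
    g = h := by
  have : g⁻¹ = h⁻¹ := Equiv.ext hw
  simpa using congrArg Inv.inv this

theorem gp_e : gp GrigQ.e = 1 := by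
  apply perm_ext
  intro w
  rw [rApp_gp, rApp_one]
  exact triv_e w

theorem gp_mem (q : GrigQ) : gp q ∈ Grigorchuk := by
  cases q
  · exact Subgroup.subset_closure (Set.mem_insert _ _)
  · exact Subgroup.subset_closure (Set.mem_insert_of_mem _ (Set.mem_insert _ _))
  · exact Subgroup.subset_closure
      (Set.mem_insert_of_mem _ (Set.mem_insert_of_mem _ (Set.mem_insert _ _)))
  · exact Subgroup.subset_closure (Set.mem_insert_of_mem _ (Set.mem_insert_of_mem _
      (Set.mem_insert_of_mem _ (Set.mem_singleton _))))
  · rw [gp_e]; exact one_mem _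

theorem P_mem (L : List GrigQ) : P L ∈ Grigorchuk := by
  apply Subgroup.list_prod_mem
  intro x hx
  obtain ⟨q, _, rfl⟩ := List.mem_map.1 hx
  exact gp_mem q

theorem gp_sq (q : GrigQ) : gp q * gp q = 1 := by
  apply perm_ext
  intro w
  rw [rApp_mul, rApp_gp, rApp_gp, rApp_one]
  have := triv_qq q w
  rwa [show ([q, q] : List GrigQ) = [q] ++ [q] from rfl, act_append, act_single,
    act_single] at this

theorem gp_inv (q : GrigQ) : (gp q)⁻¹ = gp q := inv_eq_of_mul_eq_one_right (gp_sq q)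

theorem P_reverse (L : List GrigQ) : P L.reverse = (P L)⁻¹ := by
  induction L with
  | nil => simp [P]
  | cons q L ih =>
    rw [List.reverse_cons, P_append, ih, P_single, P_cons, mul_inv_rev, gp_inv]

theorem P_repr {g : Equiv.Perm (List (Fin 2))} (hg : g ∈ Grigorchuk) :
    ∃ L : List GrigQ, g = P L := by
  induction hg using Subgroup.closure_induction with
  | mem x hx =>
    rcases hx with h | h | h | h
    · exact ⟨[GrigQ.a], by rw [P_single]; exact h⟩
    · exact ⟨[GrigQ.b], by rw [P_single]; exact h⟩
    · exact ⟨[GrigQ.c], by rw [P_single]; exact h⟩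
    · exact ⟨[GrigQ.d], by rw [P_single]; exact h⟩
  | one => exact ⟨[], by simp [P]⟩
  | mul x y hx hy ihx ihy =>
    obtain ⟨L1, rfl⟩ := ihx
    obtain ⟨L2, rfl⟩ := ihy
    exact ⟨L1 ++ L2, (P_append L1 L2).symm⟩
  | inv x hx ihx =>
    obtain ⟨L, rfl⟩ := ihx
    exact ⟨L.reverse, (P_reverse L).symm⟩

theorem P_rep (m : ℕ) (L : List GrigQ) : P (rep m L) = (P L) ^ m := by
  induction m with
  | zero => simp [rep, P]
  | succ m ih =>
    rw [show rep (m+1) L = L ++ rep m L from by simp [rep, List.replicate_succ],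
      P_append, ih, pow_succ']

theorem torsion {g : Equiv.Perm (List (Fin 2))} (hg : g ∈ Grigorchuk) :
    ∃ k : ℕ, g ^ (2 ^ k) = 1 := by
  obtain ⟨L, rfl⟩ := P_repr hg
  obtain ⟨k, hk⟩ := allOrd2 L
  refine ⟨k, ?_⟩
  rw [← P_rep]
  apply perm_ext
  intro w
  rw [rApp_P, rApp_one, act_rep, hk]
  rfl

-- transitivity on levels, for infinitude
def liftQ : GrigQ → List GrigQ
  | .a => [.b]
  | .b => [.a, .d, .a]
  | .c => [.a, .b, .a]
  | .d => [.a, .c, .a]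
  | .e => []

theorem liftQ_out : ∀ (q : GrigQ) (x : Fin 2), outL (liftQ q) x = x := by decide

theorem act_ebe (q : GrigQ) (w : List (Fin 2)) :
    act [GrigQ.e, q, GrigQ.e] w = act [q] w := by
  rw [show ([GrigQ.e, q, GrigQ.e] : List GrigQ) = [GrigQ.e] ++ [q] ++ [GrigQ.e] from rfl,
    act_append, act_append, show act [GrigQ.e] w = w from triv_e w]
  exact triv_e _

theorem liftQ_sec (q : GrigQ) (w : List (Fin 2)) :
    act (secL (liftQ q) 0) w = act [q] w := by
  cases q
  · rw [show secL (liftQ GrigQ.a) 0 = [GrigQ.a] from by decide]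
  · rw [show secL (liftQ GrigQ.b) 0 = [GrigQ.e, GrigQ.b, GrigQ.e] from by decide, act_ebe]
  · rw [show secL (liftQ GrigQ.c) 0 = [GrigQ.e, GrigQ.c, GrigQ.e] from by decide, act_ebe]
  · rw [show secL (liftQ GrigQ.d) 0 = [GrigQ.e, GrigQ.d, GrigQ.e] from by decide, act_ebe]
  · rw [show secL (liftQ GrigQ.e) 0 = [] from by decide]
    exact (triv_e w).symm

def liftW (L : List GrigQ) : List GrigQ := (L.map liftQ).flatten

theorem liftW_cons (q : GrigQ) (L : List GrigQ) :
    liftW (q :: L) = liftQ q ++ liftW L := by simp [liftW]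

theorem liftW_out (L : List GrigQ) (x : Fin 2) : outL (liftW L) x = x := by
  induction L generalizing x with
  | nil => rfl
  | cons q L ih => rw [liftW_cons, outL_append, liftQ_out, ih]

theorem liftW_sec (L : List GrigQ) (w : List (Fin 2)) :
    act (secL (liftW L) 0) w = act L w := by
  induction L generalizing w with
  | nil => rfl
  | cons q L ih =>
    rw [liftW_cons, secL_append, liftQ_out, act_append, liftQ_sec, ih]
    rfl

theorem transit : ∀ v : List (Fin 2), ∃ L, act L (List.replicate v.length 0) = v := by
  intro v
  induction v with
  | nil => exact ⟨[], rfl⟩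
  | cons x u ih =>
    obtain ⟨L', hL'⟩ := ih
    rcases fin2 x with rfl | rfl
    · refine ⟨liftW L', ?_⟩
      rw [show List.replicate (((0:Fin 2) :: u).length) (0:Fin 2)
          = (0:Fin 2) :: List.replicate u.length 0 from by simp [List.replicate_succ],
        act_word_cons, liftW_out, liftW_sec, hL']
    · refine ⟨liftW L' ++ [GrigQ.a], ?_⟩
      rw [show List.replicate (((1:Fin 2) :: u).length) (0:Fin 2)
          = (0:Fin 2) :: List.replicate u.length 0 from by simp [List.replicate_succ],
        act_append, act_word_cons, liftW_out, liftW_sec, hL',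
        act_word_cons, show outL [GrigQ.a] 0 = 1 from by decide,
        show secL [GrigQ.a] 0 = [GrigQ.e] from by decide,
        show act [GrigQ.e] u = u from triv_e u]

theorem grig_infinite : Infinite Grigorchuk := by
  rw [← not_finite_iff_infinite]
  intro hfin
  set N := Nat.card Grigorchuk with hN
  have key : ∀ v : Fin (N + 1) → Fin 2, ∃ g : Grigorchuk,
      rApp g.1 (List.replicate (N + 1) (0 : Fin 2)) = List.ofFn v := by
    intro v
    obtain ⟨L, hL⟩ := transit (List.ofFn v)
    refine ⟨⟨P L, P_mem L⟩, ?_⟩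
    rw [rApp_P]
    simpa using hL
  choose f hf using key
  have hinj : Function.Injective f := by
    intro v1 v2 h
    have h1 := hf v1
    have h2 := hf v2
    rw [h] at h1
    have := h1.symm.trans h2
    exact List.ofFn_injective this
  have hle : Nat.card (Fin (N + 1) → Fin 2) ≤ N := by
    rw [hN]
    exact Nat.card_le_card_of_injective f hinj
  have hcard : Nat.card (Fin (N + 1) → Fin 2) = 2 ^ (N + 1) := by
    simp [Nat.card_eq_fintype_card]
  rw [hcard] at hle
  have h2 := Nat.lt_two_pow_self (n := N)
  have h3 : 2 ^ N ≤ 2 ^ (N + 1) := Nat.pow_le_pow_right (by norm_num) (Nat.le_succ N)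
  omega

end Grig
end AutSG
end AutSG

open AutSG in
/-- The first Grigorchuk group `G₀` is infinite, and every element of `G₀`
has finite order a power of `2`. -/
theorem grigorchuk_infinite_and_two_torsion :
    Infinite Grigorchuk ∧ ∀ g ∈ Grigorchuk, ∃ k : ℕ, g ^ (2 ^ k) = 1 := by
  exact ⟨AutSG.Grig.grig_infinite, fun _ hg => AutSG.Grig.torsion hg⟩
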